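/- arXiv:2007.09618 — 6 statements merged into one kernel-verified Lean document; each statement's English description precedes it below -/
import Mathlib

section
/- Let G=(V,E) be an undirected graph and m: V → Z an integral vector with m̃(V) = |E|. Then G has an orientation whose in-degree vector equals m if and only if m̃(X) ≤ e_G(X) for every subset X ⊆ V. -/
open Finset

/-- Head of edge `e` under orientation `o` (an orientation picks, for each edge,
one of its two end-nodes as head). -/
def ohead {V E : Type*} (ends : E → V × V) (o : E → Bool) (e : E) : V :=
  if o e then (ends e).1 else (ends e).2

/-- Tail of edge `e` under orientation `o`. -/
def otail {V E : Type*} (ends : E → V × V) (o : E → Bool) (e : E) : V :=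
  if o e then (ends e).2 else (ends e).1

/-- In-degree of node `v` in the orientation `o` of the graph. -/
def indeg {V E : Type*} [Fintype E] [DecidableEq V] (ends : E → V × V) (o : E → Bool)
    (v : V) : ℕ :=
  (Finset.univ.filter fun e => ohead ends o e = v).card

/-- `e_G(X)`: number of edges with at least one end-node in `X`. -/
def eG {V E : Type*} [Fintype E] [DecidableEq V] (ends : E → V × V) (X : Finset V) : ℕ :=
  (Finset.univ.filter fun e => (ends e).1 ∈ X ∨ (ends e).2 ∈ X).card

/-- `i_G(X)`: number of edges induced by `X` (both end-nodes in `X`). -/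
def iG {V E : Type*} [Fintype E] [DecidableEq V] (ends : E → V × V) (X : Finset V) : ℕ :=
  (Finset.univ.filter fun e => (ends e).1 ∈ X ∧ (ends e).2 ∈ X).card

/-- `ρ_D(X)`: number of arcs entering `X` (head in `X`, tail outside). -/
def inCut {V E : Type*} [Fintype E] [DecidableEq V] (ends : E → V × V) (o : E → Bool)
    (X : Finset V) : ℕ :=
  (Finset.univ.filter fun e => ohead ends o e ∈ X ∧ otail ends o e ∉ X).card

/-- `d_G(X)`: number of edges with exactly one end-node in `X`. -/
def dG {V E : Type*} [Fintype E] [DecidableEq V] (ends : E → V × V) (X : Finset V) : ℕ :=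
  (Finset.univ.filter fun e =>
    ((ends e).1 ∈ X ∧ (ends e).2 ∉ X) ∨ ((ends e).2 ∈ X ∧ (ends e).1 ∉ X)).card

/-- `Reach ends o s t`: there is a directed path from `s` to `t` in the orientation `o`. -/
def Reach {V E : Type*} (ends : E → V × V) (o : E → Bool) : V → V → Prop :=
  Relation.ReflTransGen fun u v => ∃ e, otail ends o e = u ∧ ohead ends o e = v

/-- `IsDipath ends o s t P`: the list of edges `P` forms a directed walk from `s` to `t`. -/
def IsDipath {V E : Type*} (ends : E → V × V) (o : E → Bool) : V → V → List E → Prop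
  | s, t, [] => s = t
  | s, t, e :: P => otail ends o e = s ∧ IsDipath ends o (ohead ends o e) t P

/-- The components of `m` sorted in decreasing order. -/
def decSeq {V : Type*} [Fintype V] (m : V → ℕ) : List ℕ :=
  (Multiset.sort (Finset.univ.val.map m) (· ≤ ·)).reverse

/-- The components of `m` sorted in increasing order. -/
def incSeq {V : Type*} [Fintype V] (m : V → ℕ) : List ℕ :=
  Multiset.sort (Finset.univ.val.map m) (· ≤ ·)

/-!
An orientation is a choice of one end-node of every edge as its head. Give node `v` exactly
`m v` slots; an orientation with in-degree vector `m` is then an injection of the edges into the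
slots that sends each edge to a slot of one of its end-nodes, since `m̃(V) = |E|` forces it to be
a bijection. By Hall's theorem such an injection exists as soon as every edge set `F` with
end-node set `X` satisfies `|F| ≤ m̃(X)`. No edge of `F` meets `Y = V \ X`, so
`|F| ≤ |E| - e_G(Y) ≤ |E| - m̃(Y) = m̃(X)`.
-/

section

variable {V E : Type*} (ends : E → V × V)

lemma ohead_eq_or (o : E → Bool) (e : E) :
    ohead ends o e = (ends e).1 ∨ ohead ends o e = (ends e).2 := by
  unfold ohead; split <;> simp

lemma exists_ohead_eq (f : E → V) (hf : ∀ e, f e = (ends e).1 ∨ f e = (ends e).2) :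
    ∃ o : E → Bool, ∀ e, ohead ends o e = f e := by
  classical
  refine ⟨fun e => decide (f e = (ends e).1), fun e => ?_⟩
  unfold ohead
  split <;> grind

variable [DecidableEq V]

def endpoints (F : Finset E) : Finset V :=
  F.biUnion fun e => {(ends e).1, (ends e).2}

variable [Fintype E]

lemma sum_indeg_eq_card (o : E → Bool) (X : Finset V) :
    ∑ v ∈ X, indeg ends o v = #{e | ohead ends o e ∈ X} :=
  sum_card_fiberwise_eq_card_filter _ _ _

lemma sum_indeg_le_eG (o : E → Bool) (X : Finset V) :
    ∑ v ∈ X, indeg ends o v ≤ eG ends X := by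
  rw [sum_indeg_eq_card]
  refine card_le_card (monotone_filter_right _ fun e he => ?_)
  rcases ohead_eq_or ends o e with h | h <;> simp_all

lemma sum_indeg [Fintype V] (o : E → Bool) : ∑ v, indeg ends o v = Fintype.card E := by
  simp [sum_indeg_eq_card]

lemma eG_le_card (X : Finset V) : eG ends X ≤ Fintype.card E :=
  card_filter_le _ _

lemma card_add_eG_compl_endpoints_le [Fintype V] (F : Finset E) :
    #F + eG ends (endpoints ends F)ᶜ ≤ Fintype.card E := by
  have hdisj : Disjoint F
      ({e | (ends e).1 ∈ (endpoints ends F)ᶜ ∨ (ends e).2 ∈ (endpoints ends F)ᶜ} : Finset E) := by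
    refine disjoint_left.mpr fun e he => ?_
    simp only [endpoints, mem_filter, mem_univ, true_and, mem_compl, mem_biUnion, mem_insert,
      mem_singleton, not_exists, not_and]
    grind
  rw [eG, ← card_disjUnion _ _ hdisj]
  exact card_le_univ _

lemma exists_indeg_le_of_card_le_sum (b : V → ℕ)
    (hb : ∀ F : Finset E, #F ≤ ∑ v ∈ endpoints ends F, b v) :
    ∃ o : E → Bool, ∀ v, indeg ends o v ≤ b v := by
  let slots : E → Finset (Σ v, Fin (b v)) := fun e =>
    ({(ends e).1, (ends e).2} : Finset V).sigma fun _ => univ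
  have hbiUnion (F : Finset E) : F.biUnion slots = (endpoints ends F).sigma fun _ => univ := by
    ext ⟨v, i⟩
    simp [slots, endpoints]
  obtain ⟨f, hf_inj, hf⟩ := (all_card_le_biUnion_card_iff_exists_injective slots).mp fun F => by
    simpa [hbiUnion, card_sigma] using hb F
  obtain ⟨o, ho⟩ := exists_ohead_eq ends (fun e => (f e).1) fun e => by simpa [slots] using hf e
  refine ⟨o, fun v => ?_⟩
  calc indeg ends o v = #{e | (f e).1 = v} := by simp only [indeg, ho]
    _ ≤ #(({v} : Finset V).sigma fun _ => univ) :=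
        card_le_card_of_injOn f (fun e he => by simp_all) hf_inj.injOn
    _ = b v := by simp

variable [Fintype V] (m : V → ℤ)

lemma nonneg_of_sum_le_eG (hm : ∑ v, m v = (Fintype.card E : ℤ))
    (hX : ∀ X : Finset V, ∑ v ∈ X, m v ≤ (eG ends X : ℤ)) (v : V) : 0 ≤ m v := by
  have := hX (univ.erase v)
  have : (eG ends (univ.erase v) : ℤ) ≤ Fintype.card E := mod_cast eG_le_card ends _
  rw [← sum_erase_add _ _ (mem_univ v)] at hm
  linarith

lemma card_le_sum_endpoints_of_sum_le_eG (hm : ∑ v, m v = (Fintype.card E : ℤ))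
    (hX : ∀ X : Finset V, ∑ v ∈ X, m v ≤ (eG ends X : ℤ)) (F : Finset E) :
    (#F : ℤ) ≤ ∑ v ∈ endpoints ends F, m v := by
  have := card_add_eG_compl_endpoints_le ends F
  have := hX (endpoints ends F)ᶜ
  rw [← sum_compl_add_sum (endpoints ends F)] at hm
  omega

end

theorem orientation_lemma_general {V E : Type*} [Fintype V] [Fintype E] [DecidableEq V]
    (ends : E → V × V)
    (m : V → ℤ) (hm : ∑ v, m v = (Fintype.card E : ℤ)) :
    (∃ o : E → Bool, ∀ v, (indeg ends o v : ℤ) = m v) ↔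
      ∀ X : Finset V, ∑ v ∈ X, m v ≤ (eG ends X : ℤ) := by
  constructor
  · rintro ⟨o, ho⟩ X
    simp only [← ho]
    exact_mod_cast sum_indeg_le_eG ends o X
  · intro hX
    have hm_nonneg := nonneg_of_sum_le_eG ends m hm hX
    obtain ⟨o, ho⟩ := exists_indeg_le_of_card_le_sum ends (fun v => (m v).toNat) fun F => by
      have := card_le_sum_endpoints_of_sum_le_eG ends m hm hX F
      zify
      simpa [Int.toNat_of_nonneg (hm_nonneg _)] using this
    have hle (v : V) : (indeg ends o v : ℤ) ≤ m v := by
      have := ho v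
      have := hm_nonneg v
      omega
    have hsum : ∑ v, (indeg ends o v : ℤ) = ∑ v, m v := by
      rw [hm]
      exact_mod_cast sum_indeg ends o
    exact ⟨o, fun v => (sum_eq_sum_iff_of_le fun v _ => hle v).mp hsum v (mem_univ v)⟩

/-- **Orientation lemma.** `G` has an orientation with in-degree vector `m`
iff `m̃(X) ≤ e_G(X)` for every `X ⊆ V`. -/
theorem orientation_lemma {V E : Type*} [Fintype V] [Fintype E] [DecidableEq V]
    (ends : E → V × V) (hloop : ∀ e, (ends e).1 ≠ (ends e).2)
    (m : V → ℤ) (hm : ∑ v, m v = (Fintype.card E : ℤ)) :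
    (∃ o : E → Bool, ∀ v, (indeg ends o v : ℤ) = m v) ↔
      ∀ X : Finset V, ∑ v ∈ X, m v ≤ (eG ends X : ℤ) :=
  orientation_lemma_general ends m hm
end

section
/- An orientation of an undirected graph G is decreasingly minimal (with respect to in-degree vectors) if and only if it is increasingly maximal. -/
open Finset

/-!
The in-degree vectors of the orientations of a graph satisfy two one-sided forms of the exchange
axiom of M-convex sets. If `m u < m' u`, a unit of `m'` can be moved from `u` to some `v` with
`m' v < m v`: reverse a directed path of `o'` ending at `u` whose edges are oriented differently
in `o`. Dually, a unit can be moved into a coordinate where `m'` is too small: apply the first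
form to the reversed orientations.

For a set `B` with both properties, decreasing minimality and increasing maximality of `m ∈ B` are
both equivalent to the absence of an improving move `m - χ_u + χ_v ∈ B` with `m u ≥ m v + 2`.
Such a move strictly improves both sorted sequences. Conversely, if there is none, any `m' ∈ B`
can be walked to `m` by exchanges that take a unit out of a largest surplus coordinate of `m'`
(resp. put one into a smallest deficit coordinate); each of them moves a unit from a larger to a
smaller value, which never worsens the sorted sequences.
-/

namespace List

variable {α : Type*} [LinearOrder α] {P X Y : List α} {c : α} {k j : ℕ}

theorem append_replicate_lt_of_forall_lt (hkj : k < j) (hX : ∀ x ∈ X, x < c) :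
    P ++ replicate k c ++ X < P ++ replicate j c ++ Y := by
  obtain ⟨i, rfl⟩ : ∃ i, j = k + (i + 1) := ⟨j - k - 1, by omega⟩
  rw [replicate_add, replicate_succ, append_assoc, append_assoc, append_assoc]
  refine append_left_lt (append_left_lt ?_)
  cases X with
  | nil => exact nil_lt_cons _ _
  | cons x X => exact cons_lt_cons_iff.2 (Or.inl (hX x mem_cons_self))

theorem append_replicate_lt_of_forall_gt (hkj : k < j) (hX : ∀ x ∈ X, c < x) (hX₀ : X ≠ []) :
    P ++ replicate j c ++ Y < P ++ replicate k c ++ X := by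
  obtain ⟨i, rfl⟩ : ∃ i, j = k + (i + 1) := ⟨j - k - 1, by omega⟩
  rw [replicate_add, replicate_succ, append_assoc, append_assoc, append_assoc]
  refine append_left_lt (append_left_lt ?_)
  obtain ⟨x, X, rfl⟩ := exists_cons_of_ne_nil hX₀
  exact cons_lt_cons_iff.2 (Or.inl (hX x mem_cons_self))

end List

namespace Multiset

variable {α : Type*} [LinearOrder α]

theorem sort_eq_filter_lt_append (s : Multiset α) (c : α) :
    s.sort (· ≤ ·) = (s.filter (· < c)).sort (· ≤ ·) ++ List.replicate (s.count c) c ++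
      (s.filter (c < ·)).sort (· ≤ ·) := by
  refine List.Perm.eq_of_pairwise' (s.pairwise_sort _) ?_ ?_
  · simp only [List.pairwise_append, List.pairwise_replicate, pairwise_sort, le_refl, or_true,
      List.mem_append, mem_sort, mem_filter, List.mem_replicate, true_and]
    refine ⟨fun a ha b hb => hb.2 ▸ ha.2.le, ?_⟩
    rintro a (⟨-, ha⟩ | ⟨-, rfl⟩) b ⟨-, hb⟩
    exacts [(ha.trans hb).le, hb.le]
  · rw [← coe_eq_coe, ← coe_add, ← coe_add, sort_eq, sort_eq, coe_replicate]
    ext x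
    simp only [count_add, count_filter, count_replicate]
    rcases lt_trichotomy x c with hx | rfl | hx
    · simp [hx, hx.not_gt, hx.ne']
    · simp
    · simp [hx, hx.not_gt, hx.ne]

theorem sort_lt_sort_of_transfer (T : Multiset ℕ) {a b : ℕ} (hab : b + 2 ≤ a) :
    (a ::ₘ b ::ₘ T).sort (· ≤ ·) < ((a - 1) ::ₘ (b + 1) ::ₘ T).sort (· ≤ ·) := by
  rw [sort_eq_filter_lt_append _ b, sort_eq_filter_lt_append ((a - 1) ::ₘ _) b]
  have hlow : (a ::ₘ b ::ₘ T).filter (· < b) = ((a - 1) ::ₘ (b + 1) ::ₘ T).filter (· < b) := by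
    simp only [filter_cons]
    split_ifs <;> first | rfl | omega
  rw [hlow]
  refine List.append_replicate_lt_of_forall_gt ?_ (by simp) ?_
  · simp only [count_cons]
    split_ifs <;> omega
  · exact List.ne_nil_of_mem (a := b + 1) (by simp)

theorem reverse_sort_lt_reverse_sort_of_transfer (T : Multiset ℕ) {a b : ℕ} (hab : b + 2 ≤ a) :
    (((a - 1) ::ₘ (b + 1) ::ₘ T).sort (· ≤ ·)).reverse <
      ((a ::ₘ b ::ₘ T).sort (· ≤ ·)).reverse := by
  rw [sort_eq_filter_lt_append _ a, sort_eq_filter_lt_append (a ::ₘ _) a]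
  have hhigh : ((a - 1) ::ₘ (b + 1) ::ₘ T).filter (a < ·) = (a ::ₘ b ::ₘ T).filter (a < ·) := by
    simp only [filter_cons]
    split_ifs <;> first | rfl | omega
  simp only [hhigh, List.reverse_append, List.reverse_replicate, ← List.append_assoc]
  refine List.append_replicate_lt_of_forall_lt ?_ (by simp)
  simp only [count_cons]
  split_ifs <;> omega

end Multiset

section Moves

-- `m' + Pi.single u 1 = m + Pi.single v 1` is `m' = m - χ_u + χ_v` without truncated subtraction.
variable {V : Type*} [Fintype V] [DecidableEq V] {m m' : V → ℕ} {u v : V}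

theorem map_univ_of_move (h : m' + Pi.single u 1 = m + Pi.single v 1) (huv : u ≠ v) :
    ∃ T, univ.val.map m = m u ::ₘ m v ::ₘ T ∧ univ.val.map m' = (m u - 1) ::ₘ (m v + 1) ::ₘ T := by
  have hw (w : V) : m' w + (if w = u then 1 else 0) = m w + (if w = v then 1 else 0) := by
    simpa [Pi.single_apply] using congrFun h w
  have hv : v ∈ univ.val.erase u := (Multiset.mem_erase_of_ne huv.symm).2 (mem_univ v)
  have huniv : univ.val = u ::ₘ v ::ₘ ((univ.erase u).erase v).val := by
    rw [Finset.erase_val, Finset.erase_val, Multiset.cons_erase hv,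
      Multiset.cons_erase (mem_univ u)]
  refine ⟨((univ.erase u).erase v).val.map m,
    by rw [huniv, Multiset.map_cons, Multiset.map_cons], ?_⟩
  have hu : m' u + 1 = m u := by simpa [huv] using hw u
  have hv' : m' v = m v + 1 := by simpa [huv.symm] using hw v
  rw [huniv, Multiset.map_cons, Multiset.map_cons, show m' u = m u - 1 by omega, hv']
  refine congrArg _ (congrArg _ (Multiset.map_congr rfl fun w hw' => ?_))
  simp only [Finset.mem_val, mem_erase] at hw'
  simpa [hw'.1, hw'.2.1] using hw w

theorem map_univ_eq_of_move (h : m' + Pi.single u 1 = m + Pi.single v 1) (huv : m v + 1 = m u) :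
    univ.val.map m' = univ.val.map m := by
  obtain ⟨T, hm, hm'⟩ := map_univ_of_move h (by rintro rfl; omega)
  rw [hm, hm', ← huv, Nat.add_sub_cancel, Multiset.cons_swap]

theorem decSeq_lt_of_move (h : m' + Pi.single u 1 = m + Pi.single v 1) (hgap : m v + 2 ≤ m u) :
    decSeq m' < decSeq m := by
  obtain ⟨T, hm, hm'⟩ := map_univ_of_move h (by rintro rfl; omega)
  rw [decSeq, decSeq, hm, hm']
  exact Multiset.reverse_sort_lt_reverse_sort_of_transfer T hgap

theorem incSeq_lt_of_move (h : m' + Pi.single u 1 = m + Pi.single v 1) (hgap : m v + 2 ≤ m u) :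
    incSeq m < incSeq m' := by
  obtain ⟨T, hm, hm'⟩ := map_univ_of_move h (by rintro rfl; omega)
  rw [incSeq, incSeq, hm, hm']
  exact Multiset.sort_lt_sort_of_transfer T hgap

theorem decSeq_le_of_move (h : m' + Pi.single u 1 = m + Pi.single v 1) (hlt : m v < m u) :
    decSeq m' ≤ decSeq m := by
  rcases (show m v + 1 = m u ∨ m v + 2 ≤ m u by omega) with hgap | hgap
  · rw [decSeq, decSeq, map_univ_eq_of_move h hgap]
  · exact (decSeq_lt_of_move h hgap).le

theorem incSeq_le_of_move (h : m' + Pi.single u 1 = m + Pi.single v 1) (hlt : m v < m u) :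
    incSeq m ≤ incSeq m' := by
  rcases (show m v + 1 = m u ∨ m v + 2 ≤ m u by omega) with hgap | hgap
  · rw [incSeq, incSeq, map_univ_eq_of_move h hgap]
  · exact (incSeq_lt_of_move h hgap).le

end Moves

section ExchangeSets

variable {V : Type*} [Fintype V] [DecidableEq V] {B : Set (V → ℕ)} {m m' : V → ℕ}

def ExchangeOfSurplus (B : Set (V → ℕ)) : Prop :=
  ∀ m ∈ B, ∀ m' ∈ B, ∀ u, m u < m' u →
    ∃ v, m' v < m v ∧ ∃ m'' ∈ B, m'' + Pi.single u 1 = m' + Pi.single v 1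

def ExchangeOfDeficit (B : Set (V → ℕ)) : Prop :=
  ∀ m ∈ B, ∀ m' ∈ B, ∀ u, m' u < m u →
    ∃ v, m v < m' v ∧ ∃ m'' ∈ B, m'' + Pi.single v 1 = m' + Pi.single u 1

def NoImprovingMove (B : Set (V → ℕ)) (m : V → ℕ) : Prop :=
  ∀ m'' ∈ B, ∀ u v, m'' + Pi.single u 1 = m + Pi.single v 1 → m u ≤ m v + 1

theorem ExchangeOfDeficit.exists_lt_of_ne (hB : ExchangeOfDeficit B) (hm : m ∈ B) (hm' : m' ∈ B)
    (hne : m ≠ m') : ∃ u, m u < m' u := by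
  by_contra! hle
  obtain ⟨w, hw⟩ := Function.ne_iff.1 hne
  obtain ⟨v, hv, -⟩ := hB m hm m' hm' w (lt_of_le_of_ne (hle w) (Ne.symm hw))
  exact (hle v).not_gt hv

theorem sum_tsub_lt_of_move {m'' : V → ℕ} {u v : V} (h : m'' + Pi.single u 1 = m' + Pi.single v 1)
    (hu : m u < m' u) (hv : m' v < m v) : ∑ w, (m'' w - m w) < ∑ w, (m' w - m w) := by
  have hw (w : V) : m'' w + (if w = u then 1 else 0) = m' w + (if w = v then 1 else 0) := by
    simpa [Pi.single_apply] using congrFun h w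
  refine Finset.sum_lt_sum (fun w _ => ?_) ⟨u, mem_univ u, ?_⟩
  · have := hw w
    split_ifs at this <;> subst_vars <;> omega
  · have huv : u ≠ v := by rintro rfl; omega
    have := hw u
    rw [if_pos rfl, if_neg huv] at this
    omega

theorem decMin_of_noImprovingMove (hS : ExchangeOfSurplus B) (hD : ExchangeOfDeficit B)
    (hm : m ∈ B) (hmove : NoImprovingMove B m) : ∀ m' ∈ B, decSeq m ≤ decSeq m' := by
  intro m' hm'
  induction hn : ∑ w, (m' w - m w) using Nat.strong_induction_on generalizing m' with
  | _ n ih =>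
    rcases eq_or_ne m m' with rfl | hne
    · exact le_rfl
    obtain ⟨u, hu, humax⟩ : ∃ u, m u < m' u ∧ ∀ w, m w < m' w → m' w ≤ m' u := by
      obtain ⟨u₀, hu₀⟩ := hD.exists_lt_of_ne hm hm' hne
      obtain ⟨u, hu, humax⟩ := exists_max_image {w | m w < m' w} m' ⟨u₀, by simpa using hu₀⟩
      exact ⟨u, by simpa using hu, fun w hw => humax w (by simpa using hw)⟩
    obtain ⟨v, hv, m'', hm'', hmove''⟩ := hS m hm m' hm' u hu
    -- otherwise a second exchange would yield an improving move of `m` from `v` to some `w`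
    have hvu : m' v < m' u := by
      by_contra! hle
      obtain ⟨w, hw, m₁, hm₁, hmove₁⟩ := hS m' hm' m hm v hv
      have := hmove m₁ hm₁ v w hmove₁
      have := humax w hw
      omega
    calc decSeq m ≤ decSeq m'' := ih _ (hn ▸ sum_tsub_lt_of_move hmove'' hu hv) m'' hm'' rfl
      _ ≤ decSeq m' := decSeq_le_of_move hmove'' hvu

theorem incMax_of_noImprovingMove (hD : ExchangeOfDeficit B)
    (hm : m ∈ B) (hmove : NoImprovingMove B m) : ∀ m' ∈ B, incSeq m' ≤ incSeq m := by
  intro m' hm'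
  induction hn : ∑ w, (m' w - m w) using Nat.strong_induction_on generalizing m' with
  | _ n ih =>
    rcases eq_or_ne m' m with rfl | hne
    · exact le_rfl
    obtain ⟨u, hu, humin⟩ : ∃ u, m' u < m u ∧ ∀ w, m' w < m w → m' u ≤ m' w := by
      obtain ⟨u₀, hu₀⟩ := hD.exists_lt_of_ne hm' hm hne
      obtain ⟨u, hu, humin⟩ := exists_min_image {w | m' w < m w} m' ⟨u₀, by simpa using hu₀⟩
      exact ⟨u, by simpa using hu, fun w hw => humin w (by simpa using hw)⟩
    obtain ⟨v, hv, m'', hm'', hmove''⟩ := hD m hm m' hm' u hu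
    have huv : m' u < m' v := by
      by_contra! hle
      obtain ⟨w, hw, m₁, hm₁, hmove₁⟩ := hD m' hm' m hm v hv
      have := hmove m₁ hm₁ w v hmove₁
      have := humin w hw
      omega
    calc incSeq m' ≤ incSeq m'' := incSeq_le_of_move hmove'' huv
      _ ≤ incSeq m := ih _ (hn ▸ sum_tsub_lt_of_move hmove'' hv hu) m'' hm'' rfl

theorem noImprovingMove_of_decMin (hmin : ∀ m' ∈ B, decSeq m ≤ decSeq m') :
    NoImprovingMove B m := fun m'' hm'' _ _ h =>
  not_lt.1 fun hgap => (hmin m'' hm'').not_gt (decSeq_lt_of_move h hgap)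

theorem noImprovingMove_of_incMax (hmax : ∀ m' ∈ B, incSeq m' ≤ incSeq m) :
    NoImprovingMove B m := fun m'' hm'' _ _ h =>
  not_lt.1 fun hgap => (hmax m'' hm'').not_gt (incSeq_lt_of_move h hgap)

theorem decMin_iff_incMax (hS : ExchangeOfSurplus B) (hD : ExchangeOfDeficit B) (hm : m ∈ B) :
    (∀ m' ∈ B, decSeq m ≤ decSeq m') ↔ ∀ m' ∈ B, incSeq m' ≤ incSeq m :=
  ⟨fun h => incMax_of_noImprovingMove hD hm (noImprovingMove_of_decMin h),
    fun h => decMin_of_noImprovingMove hS hD hm (noImprovingMove_of_incMax h)⟩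

end ExchangeSets

theorem card_fiber_update_add {E V : Type*} [Fintype E] [DecidableEq E] [DecidableEq V]
    (f : E → V) (e : E) (x : V) :
    (fun w => #{e' | Function.update f e x e' = w}) + Pi.single (f e) 1 =
      (fun w => #{e' | f e' = w}) + Pi.single x 1 := by
  funext w
  simp only [Pi.add_apply, Pi.single_apply, card_filter]
  rw [← Finset.add_sum_erase _ _ (mem_univ e), ← Finset.add_sum_erase _ _ (mem_univ e),
    Finset.sum_congr rfl fun e' he' => by rw [Function.update_of_ne (ne_of_mem_erase he')]]
  simp only [Function.update_self, @eq_comm _ w]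
  ring

section Orientations

variable {V E : Type*} (ends : E → V × V)

theorem ohead_update_not [DecidableEq E] (o : E → Bool) (e : E) :
    ohead ends (Function.update o e (!o e)) =
      Function.update (ohead ends o) e (otail ends o e) := by
  funext e'
  rcases eq_or_ne e' e with rfl | he
  · simp only [ohead, otail, Function.update_self]
    cases o e' <;> rfl
  · simp only [ohead, Function.update_of_ne he]

theorem indeg_update_not_add [Fintype E] [DecidableEq E] [DecidableEq V] (o : E → Bool) (e : E) :
    indeg ends (Function.update o e (!o e)) + Pi.single (ohead ends o e) 1 =
      indeg ends o + Pi.single (otail ends o e) 1 := by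
  have := card_fiber_update_add (ohead ends o) e (otail ends o e)
  rwa [← ohead_update_not] at this

theorem otail_eq_ohead_of_ne {o o' : E → Bool} {e : E} (h : o e ≠ o' e) :
    otail ends o' e = ohead ends o e := by
  simp only [otail, ohead]
  cases ho : o e <;> cases ho' : o' e <;> simp_all

theorem exists_ohead_of_indeg_lt [Fintype E] [DecidableEq V] {o o' : E → Bool} {u : V}
    (h : indeg ends o u < indeg ends o' u) : ∃ e, ohead ends o' e = u ∧ ohead ends o e ≠ u := by
  by_contra! hc
  exact h.not_ge (card_le_card fun e he => by simp_all)

theorem card_filter_ne_update_not [Fintype E] [DecidableEq E] {o o' : E → Bool} {e : E}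
    (h : o e ≠ o' e) :
    #{e' | o e' ≠ Function.update o' e (!o' e) e'} + 1 = #{e' | o e' ≠ o' e'} := by
  rw [← card_erase_add_one (s := {e' | o e' ≠ o' e'}) (by simpa using h)]
  congr 2
  ext e'
  rcases eq_or_ne e' e with rfl | he
  · revert h; simp
  · simp [he]

theorem exchangeOfSurplus_range_indeg [Fintype V] [Fintype E] [DecidableEq V] [DecidableEq E] :
    ExchangeOfSurplus (Set.range (indeg ends)) := by
  rintro _ ⟨o, rfl⟩ _ ⟨o', rfl⟩ u hu
  induction hn : #{e | o e ≠ o' e} generalizing o' u with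
  | zero =>
    obtain rfl : o = o' := funext (by simpa using card_eq_zero.1 hn)
    exact absurd hu (lt_irrefl _)
  | succ n ih =>
    obtain ⟨e, he, heu⟩ := exists_ohead_of_indeg_lt ends hu
    have hne : o e ≠ o' e := fun h => heu (by rwa [ohead, h])
    set t := ohead ends o e
    set o₁ := Function.update o' e (!o' e)
    have hflip : indeg ends o₁ + Pi.single u 1 = indeg ends o' + Pi.single t 1 := by
      have ht : otail ends o' e = t := otail_eq_ohead_of_ne ends hne
      rw [← he, ← ht]; exact indeg_update_not_add ends o' e
    have hflip_t : indeg ends o₁ t = indeg ends o' t + 1 := by simpa [heu] using congrFun hflip t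
    have hflip_u : indeg ends o₁ u + 1 = indeg ends o' u := by
      simpa [heu.symm] using congrFun hflip u
    by_cases ht : indeg ends o' t < indeg ends o t
    · exact ⟨t, ht, _, ⟨o₁, rfl⟩, hflip⟩
    -- now `t` is a surplus coordinate of `o₁`, which differs from `o` on one edge fewer
    have hn₁ : #{e | o e ≠ o₁ e} = n :=
      Nat.succ_injective ((card_filter_ne_update_not hne).trans hn)
    obtain ⟨v, hv, _, ⟨o₂, rfl⟩, hmove⟩ := ih o₁ t (by omega) hn₁
    refine ⟨v, ?_, _, ⟨o₂, rfl⟩, ?_⟩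
    · have hflip_v : indeg ends o₁ v + (if v = u then 1 else 0) =
          indeg ends o' v + (if v = t then 1 else 0) := by
        simpa [Pi.single_apply] using congrFun hflip v
      split_ifs at hflip_v <;> subst_vars <;> omega
    · refine add_right_cancel (b := Pi.single t 1) ?_
      rw [add_right_comm, hmove, add_right_comm, hflip, add_right_comm]

theorem indeg_add_indeg_not [Fintype E] [DecidableEq V] (o : E → Bool) :
    indeg ends o + indeg ends (fun e => !o e) =
      fun w => #{e | (ends e).1 = w} + #{e | (ends e).2 = w} := by
  funext w
  simp only [Pi.add_apply, indeg, card_filter, ← sum_add_distrib]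
  refine sum_congr rfl fun e _ => ?_
  cases h : o e <;> simp [ohead, h, add_comm]

theorem exchangeOfDeficit_range_indeg [Fintype V] [Fintype E] [DecidableEq V] [DecidableEq E] :
    ExchangeOfDeficit (Set.range (indeg ends)) := by
  rintro _ ⟨o, rfl⟩ _ ⟨o', rfl⟩ u hu
  have hdeg (o : E → Bool) (w : V) := congrFun (indeg_add_indeg_not ends o) w
  simp only [Pi.add_apply] at hdeg
  obtain ⟨v, hv, _, ⟨o₂, rfl⟩, hmove⟩ := exchangeOfSurplus_range_indeg ends
    _ ⟨fun e => !o e, rfl⟩ _ ⟨fun e => !o' e, rfl⟩ u (by have := hdeg o u; have := hdeg o' u; omega)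
  refine ⟨v, by have := hdeg o v; have := hdeg o' v; omega, _, ⟨fun e => !o₂ e, rfl⟩, ?_⟩
  funext w
  have := congrFun hmove w
  have := hdeg o₂ w
  have := hdeg o' w
  simp only [Pi.add_apply, Pi.single_apply] at *
  split_ifs at * <;> omega

end Orientations

theorem decmin_iff_incmax_orientation_general {V E : Type*} [Fintype V] [Fintype E] [DecidableEq V]
    (ends : E → V × V) (o : E → Bool) :
    (∀ o' : E → Bool, decSeq (indeg ends o) ≤ decSeq (indeg ends o')) ↔
      (∀ o' : E → Bool, incSeq (indeg ends o') ≤ incSeq (indeg ends o)) := by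
  classical
  simpa only [Set.forall_mem_range] using
    decMin_iff_incMax (exchangeOfSurplus_range_indeg ends) (exchangeOfDeficit_range_indeg ends)
      (Set.mem_range_self o)

/-- An orientation of `G` is decreasingly minimal (w.r.t. in-degree vectors)
iff it is increasingly maximal. -/
theorem decmin_iff_incmax_orientation {V E : Type*} [Fintype V] [Fintype E] [DecidableEq V]
    (ends : E → V × V) (hloop : ∀ e, (ends e).1 ≠ (ends e).2) (o : E → Bool) :
    (∀ o' : E → Bool, decSeq (indeg ends o) ≤ decSeq (indeg ends o')) ↔
      (∀ o' : E → Bool, incSeq (indeg ends o') ≤ incSeq (indeg ends o)) :=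
  decmin_iff_incmax_orientation_general ends o
end

section
/- A strongly connected orientation D of a 2-edge-connected undirected graph G=(V,E) is decreasingly minimal among all strongly connected orientations of G if and only if there exist no two nodes s, t with ρ_D(t) ≥ ρ_D(s) + 2 such that D contains two arc-disjoint directed paths from s to t. -/
open Finset

/-!
Reversing one of two arc-disjoint `s`–`t` dipaths keeps an orientation strongly connected and
moves one unit of in-degree from `t` to `s`; when `ρ(t) ≥ ρ(s) + 2` this strictly decreases the
in-degree vector in the dec-min order.

Conversely, if `ρ_{D'}(t) < ρ_D(t)` for strongly connected `D` and `D'`, uncrossing the sets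
entered by exactly one arc of `D` produces `s` with `ρ_D(s) < ρ_{D'}(s)` that no such set
separates from `t`, so by Menger `D` has two arc-disjoint `s`–`t` dipaths. When `D` has no such
pair with `ρ_D(t) ≥ ρ_D(s) + 2`, using this first in `D` and then in `D'` turns any strongly
connected `D'` into one that is no larger in the dec-min order and closer to `D` in `ℓ₁`.
-/

def StronglyConnected {V E : Type*} (ends : E → V × V) (o : E → Bool) : Prop :=
  ∀ u v, Reach ends o u v

def TwoArcDisjointDipaths {V E : Type*} (ends : E → V × V) (o : E → Bool) (s t : V) : Prop :=
  ∃ P Q : List E, IsDipath ends o s t P ∧ IsDipath ends o s t Q ∧ P.Disjoint Q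

def reverseArcs {E : Type*} [DecidableEq E] (o : E → Bool) (L : List E) : E → Bool :=
  fun e => if e ∈ L then !o e else o e

section Arcs

variable {V E : Type*} {ends : E → V × V} {o o' : E → Bool} {e : E}

theorem ohead_of_eq (h : o' e = o e) : ohead ends o' e = ohead ends o e := by
  simp [ohead, h]

theorem otail_of_eq (h : o' e = o e) : otail ends o' e = otail ends o e := by
  simp [otail, h]

theorem ohead_of_eq_not (h : o' e = !o e) : ohead ends o' e = otail ends o e := by
  cases he : o e <;> simp [ohead, otail, h, he]

theorem reverseArcs_cons [DecidableEq E] (o : E → Bool) {L : List E} (he : e ∉ L) :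
    reverseArcs o (e :: L) = Function.update (reverseArcs o L) e (!reverseArcs o L e) := by
  ext e'
  by_cases h : e' = e
  · subst h; simp [reverseArcs, he]
  · simp [reverseArcs, h]

end Arcs

namespace IsDipath

variable {V E : Type*} {ends : E → V × V} {o o' : E → Bool} {s t : V} {L : List E}

theorem of_append {A B : List E} (h : IsDipath ends o s t (A ++ B)) :
    ∃ w, IsDipath ends o s w A ∧ IsDipath ends o w t B := by
  induction A generalizing s with
  | nil => exact ⟨s, rfl, h⟩
  | cons e A ih =>
    obtain ⟨w, hA, hB⟩ := ih h.2
    exact ⟨w, ⟨h.1, hA⟩, hB⟩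

theorem reach (h : IsDipath ends o s t L) : Reach ends o s t := by
  induction L generalizing s with
  | nil => obtain rfl : s = t := h; exact .refl
  | cons e L ih => exact .head ⟨e, h.1, rfl⟩ (ih h.2)

theorem of_forall_eq (h : IsDipath ends o s t L) (hL : ∀ e ∈ L, o' e = o e) :
    IsDipath ends o' s t L := by
  induction L generalizing s with
  | nil => exact h
  | cons e L ih =>
    refine ⟨(otail_of_eq (hL e List.mem_cons_self)).trans h.1, ?_⟩
    rw [ohead_of_eq (hL e List.mem_cons_self)]
    exact ih h.2 fun e' he' => hL e' (List.mem_cons_of_mem e he')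

theorem exists_nodup_subset (h : IsDipath ends o s t L) :
    ∃ L', IsDipath ends o s t L' ∧ L'.Nodup ∧ L' ⊆ L := by
  induction L generalizing s with
  | nil => exact ⟨[], h, List.nodup_nil, List.nil_subset _⟩
  | cons e L ih =>
    obtain ⟨L', hL', hnd, hsub⟩ := ih h.2
    by_cases he : e ∈ L'
    · obtain ⟨A, B, rfl⟩ := List.append_of_mem he
      obtain ⟨w, -, hB⟩ := hL'.of_append
      exact ⟨e :: B, ⟨h.1, hB.2⟩, hnd.sublist (List.sublist_append_right A _),
        fun x hx => List.mem_cons_of_mem e (hsub (List.mem_append_right A hx))⟩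
    · exact ⟨e :: L', ⟨h.1, hL'⟩, List.nodup_cons.2 ⟨he, hnd⟩, List.cons_subset_cons e hsub⟩

end IsDipath

section Reachability

variable {V E : Type*} {ends : E → V × V} {o : E → Bool} {s t : V}

theorem Reach.exists_trail (h : Reach ends o s t) :
    ∃ L, IsDipath ends o s t L ∧ L.Nodup := by
  suffices ∃ L, IsDipath ends o s t L by
    obtain ⟨L, hL⟩ := this
    obtain ⟨L', hL', hnd, -⟩ := hL.exists_nodup_subset
    exact ⟨L', hL', hnd⟩
  induction h using Relation.ReflTransGen.head_induction_on with
  | refl => exact ⟨[], rfl⟩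
  | head hstep _ ih =>
    obtain ⟨e, he, rfl⟩ := hstep
    obtain ⟨L, hL⟩ := ih
    exact ⟨e :: L, he, hL⟩

variable [Fintype E] [DecidableEq V]

theorem inCut_eq_zero_iff {X : Finset V} :
    inCut ends o X = 0 ↔ ∀ e, ohead ends o e ∈ X → otail ends o e ∈ X := by
  simp [inCut, filter_eq_empty_iff]

theorem Reach.mem_of_inCut_eq_zero {X : Finset V} (hX : inCut ends o X = 0)
    (h : Reach ends o s t) (ht : t ∈ X) : s ∈ X := by
  induction h using Relation.ReflTransGen.head_induction_on with
  | refl => exact ht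
  | head hstep _ ih =>
    obtain ⟨e, rfl, rfl⟩ := hstep
    exact inCut_eq_zero_iff.1 hX e ih

variable [Fintype V]

theorem exists_inCut_eq_zero_of_not_reach (h : ¬Reach ends o s t) :
    ∃ X : Finset V, t ∈ X ∧ s ∉ X ∧ inCut ends o X = 0 := by
  classical
  refine ⟨univ.filter fun v => ¬Reach ends o s v, by simpa, by simpa using .refl, ?_⟩
  refine inCut_eq_zero_iff.2 fun e => ?_
  simp only [mem_filter, mem_univ, true_and]
  exact mt fun hr => hr.tail ⟨e, rfl, rfl⟩

theorem StronglyConnected.inCut_pos (ho : StronglyConnected ends o) {X : Finset V}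
    (hne : X.Nonempty) (hX : X ≠ univ) : 0 < inCut ends o X := by
  obtain ⟨v, hv⟩ := hne
  obtain ⟨u, hu⟩ := by simpa [eq_univ_iff_forall] using hX
  exact Nat.pos_of_ne_zero fun h0 => hu ((ho u v).mem_of_inCut_eq_zero h0 hv)

end Reachability

section Cuts

variable {V E : Type*} [Fintype E] [DecidableEq V] {ends : E → V × V} {o o' : E → Bool}

theorem sum_indeg_eq_iG_add_inCut (o : E → Bool) (X : Finset V) :
    ∑ v ∈ X, indeg ends o v = iG ends X + inCut ends o X := by
  simp only [indeg, iG, inCut, card_filter]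
  rw [sum_comm, ← sum_add_distrib]
  refine sum_congr rfl fun e _ => ?_
  rw [sum_ite_eq]
  cases h : o e <;> by_cases h₁ : (ends e).1 ∈ X <;> by_cases h₂ : (ends e).2 ∈ X <;>
    simp [ohead, otail, *]

theorem sum_indeg_sub_indeg (o o' : E → Bool) (X : Finset V) :
    ∑ v ∈ X, ((indeg ends o v : ℤ) - indeg ends o' v) = inCut ends o X - inCut ends o' X := by
  rw [sum_sub_distrib]
  push_cast [← Nat.cast_sum, sum_indeg_eq_iG_add_inCut]
  ring

theorem inCut_add_of_indeg_add {s t : V}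
    (h : indeg ends o' + Pi.single t 1 = indeg ends o + Pi.single s 1) (X : Finset V) :
    inCut ends o' X + (if t ∈ X then 1 else 0) = inCut ends o X + if s ∈ X then 1 else 0 := by
  have := congrArg (fun m => ∑ v ∈ X, m v) h
  simp only [Pi.add_apply, sum_add_distrib, sum_pi_single', sum_indeg_eq_iG_add_inCut] at this
  omega

theorem inCut_union_add_inCut_inter_le (o : E → Bool) (A B : Finset V) :
    inCut ends o (A ∪ B) + inCut ends o (A ∩ B) ≤ inCut ends o A + inCut ends o B := by
  simp only [inCut, card_filter, ← sum_add_distrib]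
  refine sum_le_sum fun e _ => ?_
  simp only [mem_union, mem_inter]
  split_ifs <;> simp_all

variable [Fintype V]

theorem inCut_univ : inCut ends o univ = 0 := by
  simp [inCut]

theorem sum_indeg_univ : ∑ v, indeg ends o v = Fintype.card E := by
  simp [sum_indeg_eq_iG_add_inCut, inCut_univ, iG]

theorem exists_indeg_lt_of_ne (h : indeg ends o' ≠ indeg ends o) :
    ∃ t, indeg ends o' t < indeg ends o t := by
  by_contra! hle
  refine h (funext fun v => ((sum_eq_sum_iff_of_le fun v _ => hle v).1 ?_ v (mem_univ v)).symm)
  rw [sum_indeg_univ, sum_indeg_univ]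

/-- A set entered by no arc of `o'` is entered by `[t ∈ X] - [s ∈ X]` arcs of `o`, so it would
have to contain `t` but not `s`. -/
theorem StronglyConnected.of_indeg_add {s t : V} (ho : StronglyConnected ends o)
    (h : indeg ends o' + Pi.single t 1 = indeg ends o + Pi.single s 1)
    (hst : Reach ends o' s t) : StronglyConnected ends o' := by
  intro u v
  by_contra huv
  obtain ⟨X, hvX, huX, hX⟩ := exists_inCut_eq_zero_of_not_reach huv
  have hpos := ho.inCut_pos ⟨v, hvX⟩ (ne_of_mem_of_not_mem' (mem_univ u) huX).symm
  have hcut := inCut_add_of_indeg_add h X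
  rw [hX] at hcut
  by_cases htX : t ∈ X
  · rw [if_pos htX, if_pos (hst.mem_of_inCut_eq_zero hX htX)] at hcut
    omega
  · rw [if_neg htX] at hcut
    split_ifs at hcut <;> omega

end Cuts

section Reversal

variable {V E : Type*} [Fintype E] [DecidableEq V] [DecidableEq E] {ends : E → V × V}
  {o : E → Bool} {s t : V} {L : List E}

theorem indeg_update_not (o : E → Bool) (e : E) :
    indeg ends (Function.update o e (!o e)) + Pi.single (ohead ends o e) 1 =
      indeg ends o + Pi.single (otail ends o e) 1 := by
  ext v
  simp only [Pi.add_apply, indeg, card_filter, Pi.single_apply, @eq_comm _ v]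
  rw [← add_sum_erase _ _ (mem_univ e), ← add_sum_erase _ _ (mem_univ e),
    sum_congr rfl fun e' he' => by
      rw [ohead_of_eq (Function.update_of_ne (ne_of_mem_erase he') ..)],
    ohead_of_eq_not (Function.update_self ..)]
  split_ifs <;> omega

theorem IsDipath.indeg_reverseArcs (h : IsDipath ends o s t L) (hL : L.Nodup) :
    indeg ends (reverseArcs o L) + Pi.single t 1 = indeg ends o + Pi.single s 1 := by
  induction L generalizing s with
  | nil =>
    obtain rfl : s = t := h
    rw [show reverseArcs o [] = o from funext fun e => by simp [reverseArcs]]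
  | cons e L ih =>
    obtain ⟨he, hnd⟩ := List.nodup_cons.1 hL
    have hfix : reverseArcs o L e = o e := by simp [reverseArcs, he]
    have key := indeg_update_not (ends := ends) (reverseArcs o L) e
    rw [ohead_of_eq hfix, otail_of_eq hfix, h.1, ← reverseArcs_cons o he] at key
    apply add_right_cancel (b := Pi.single (ohead ends o e) 1)
    rw [add_right_comm, key, add_right_comm, ih h.2 hnd, add_right_comm]

variable [Fintype V]

theorem TwoArcDisjointDipaths.exists_stronglyConnected_add_single
    (ho : StronglyConnected ends o) (h : TwoArcDisjointDipaths ends o s t) :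
    ∃ o', StronglyConnected ends o' ∧
      indeg ends o' + Pi.single t 1 = indeg ends o + Pi.single s 1 := by
  obtain ⟨P, Q, hP, hQ, hPQ⟩ := h
  obtain ⟨P', hP', hnd, hsub⟩ := hP.exists_nodup_subset
  have hdeg := hP'.indeg_reverseArcs hnd
  refine ⟨reverseArcs o P', ho.of_indeg_add hdeg (hQ.of_forall_eq fun e he => ?_).reach, hdeg⟩
  have : e ∉ P' := fun h => hPQ (hsub h) he
  simp [reverseArcs, this]

end Reversal

def netIn {V E : Type*} [DecidableEq V] (ends : E → V × V) (o : E → Bool) (S : Finset E) :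
    V → ℤ :=
  ∑ e ∈ S, (Pi.single (ohead ends o e) 1 - Pi.single (otail ends o e) 1)

section Trails

variable {V E : Type*} [DecidableEq V] {ends : E → V × V} {o : E → Bool} {s t : V}

theorem netIn_sdiff {A B : Finset E} [DecidableEq E] (h : B ⊆ A) :
    netIn ends o (A \ B) = netIn ends o A - netIn ends o B :=
  sum_sdiff_eq_sub h

theorem IsDipath.netIn_toFinset [DecidableEq E] {L : List E} (h : IsDipath ends o s t L)
    (hL : L.Nodup) : netIn ends o L.toFinset = Pi.single t 1 - Pi.single s 1 := by
  induction L generalizing s with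
  | nil =>
    obtain rfl : s = t := h
    simp [netIn]
  | cons e L ih =>
    obtain ⟨he, hnd⟩ := List.nodup_cons.1 hL
    rw [netIn, List.toFinset_cons, sum_insert (by simpa using he), ← netIn, ih h.2 hnd, h.1]
    abel

theorem netIn_filter_ne [Fintype E] (o' : E → Bool) (v : V) :
    netIn ends o (univ.filter fun e => o' e ≠ o e) v = indeg ends o v - indeg ends o' v := by
  simp only [netIn, Finset.sum_apply, sum_filter, indeg, card_filter, Pi.sub_apply,
    Pi.single_apply, @eq_comm _ v]
  push_cast
  rw [← sum_sub_distrib]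
  refine sum_congr rfl fun e _ => ?_
  by_cases h : o' e = o e
  · simp [h, ohead_of_eq h]
  · rw [if_pos h, ohead_of_eq_not (Bool.eq_not_iff.2 h)]

theorem exists_otail_eq_of_netIn_neg {S : Finset E} {u : V} (h : netIn ends o S u < 0) :
    ∃ e ∈ S, otail ends o e = u := by
  by_contra! hS
  refine h.not_ge ?_
  simp only [netIn, Finset.sum_apply, Pi.sub_apply, Pi.single_apply]
  exact sum_nonneg fun e he => by
    rw [if_neg (Ne.symm (hS e he)), sub_zero]
    split_ifs <;> norm_num

/-- Follow unused arcs of `S` out of `u`: the net in-degree condition leaves one at every node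
other than `t`. -/
theorem exists_trail_of_netIn [DecidableEq E] (t : V) (S : Finset E) (u : V)
    (hS : ∀ v, v ≠ t → netIn ends o S v ≤ 0) (hu : u ≠ t → netIn ends o S u < 0) :
    ∃ L, IsDipath ends o u t L ∧ L.Nodup ∧ ∀ e ∈ L, e ∈ S := by
  induction S using Finset.strongInduction generalizing u with
  | H S ih =>
  by_cases hut : u = t
  · exact ⟨[], hut, List.nodup_nil, by simp⟩
  obtain ⟨e, heS, rfl⟩ := exists_otail_eq_of_netIn_neg (hu hut)
  have herase : ∀ v, netIn ends o (S.erase e) v = netIn ends o S v -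
      ((if v = ohead ends o e then 1 else 0) - if v = otail ends o e then 1 else 0) := by
    intro v
    rw [netIn, sum_erase_eq_sub heS, ← netIn]
    simp [Pi.single_apply]
  have hS' : ∀ v, v ≠ t → netIn ends o (S.erase e) v ≤ 0 := by
    intro v hv
    have := hS v hv
    have := hu hut
    rw [herase]
    rcases eq_or_ne v (otail ends o e) with rfl | h₂
    · split_ifs <;> omega
    · rw [if_neg h₂]
      split_ifs <;> omega
  have hw : ohead ends o e ≠ t → netIn ends o (S.erase e) (ohead ends o e) < 0 := by
    intro hw
    have := hS _ hw
    have := hu hut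
    rw [herase, if_pos rfl]
    split_ifs with h₁
    · rw [← h₁] at this; omega
    · omega
  obtain ⟨L, hL, hnd, hLS⟩ := ih (S.erase e) (erase_ssubset heS) (ohead ends o e) hS' hw
  refine ⟨e :: L, ⟨rfl, hL⟩, List.nodup_cons.2 ⟨fun h => notMem_erase e S (hLS e h), hnd⟩, ?_⟩
  rintro e' (_ | ⟨_, h⟩)
  exacts [heS, mem_of_mem_erase (hLS e' h)]

theorem exists_trail_of_netIn_eq [DecidableEq E] {S : Finset E} {k : ℤ} (hk : 0 < k)
    (h : netIn ends o S = Pi.single t k - Pi.single s k) :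
    ∃ L, IsDipath ends o s t L ∧ L.Nodup ∧ ∀ e ∈ L, e ∈ S := by
  refine exists_trail_of_netIn t S s (fun v hv => ?_) fun hst => ?_
  · simp only [h, Pi.sub_apply, Pi.single_apply, if_neg hv]
    split_ifs <;> omega
  · simp only [h, Pi.sub_apply, Pi.single_eq_same, Pi.single_eq_of_ne hst]
    omega

theorem twoArcDisjointDipaths_of_netIn [DecidableEq E] {D : Finset E}
    (hD : netIn ends o D = Pi.single t 2 - Pi.single s 2) : TwoArcDisjointDipaths ends o s t := by
  obtain ⟨L₁, hL₁, hnd₁, hsub₁⟩ := exists_trail_of_netIn_eq two_pos hD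
  have hD' : netIn ends o (D \ L₁.toFinset) = Pi.single t 1 - Pi.single s 1 := by
    rw [netIn_sdiff fun e he => hsub₁ e (List.mem_toFinset.1 he), hD,
      hL₁.netIn_toFinset hnd₁]
    ext v
    simp only [Pi.sub_apply, Pi.single_apply]
    split_ifs <;> omega
  obtain ⟨L₂, hL₂, -, hsub₂⟩ := exists_trail_of_netIn_eq one_pos hD'
  exact ⟨L₁, L₂, hL₁, hL₂, fun e h₁ h₂ => (mem_sdiff.1 (hsub₂ e h₂)).2 (List.mem_toFinset.2 h₁)⟩

end Trails

section Menger

variable {V E : Type*} [Fintype V] [Fintype E] [DecidableEq V] [DecidableEq E] {ends : E → V × V}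
  {o : E → Bool} {s t : V}

/-- Menger for two paths: reverse an `s`–`t` trail `P`; no set entered by a single arc of `o`
separates `s` from `t`, so an `s`–`t` trail `M` remains. The arcs on which `o` and the
orientation with `P` and then `M` reversed differ have net in-degree `2` at `t` and `-2` at `s`. -/
theorem twoArcDisjointDipaths_of_two_le_inCut
    (h : ∀ X : Finset V, t ∈ X → s ∉ X → 2 ≤ inCut ends o X) :
    TwoArcDisjointDipaths ends o s t := by
  have hreach : ∀ o', (∀ X : Finset V, t ∈ X → s ∉ X → inCut ends o' X = 0 → False) →
      Reach ends o' s t := fun o' hcut => by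
    by_contra hst
    obtain ⟨X, htX, hsX, hX⟩ := exists_inCut_eq_zero_of_not_reach hst
    exact hcut X htX hsX hX
  obtain ⟨P, hP, hPnd⟩ := (hreach o fun X htX hsX hX => by have := h X htX hsX; omega).exists_trail
  have hdegP := hP.indeg_reverseArcs hPnd
  obtain ⟨M, hM, hMnd⟩ := (hreach (reverseArcs o P) fun X htX hsX hX => by
    have := h X htX hsX
    have := inCut_add_of_indeg_add hdegP X
    simp only [htX, hsX, hX, if_true, if_false] at this
    omega).exists_trail
  have hdegM := hM.indeg_reverseArcs hMnd
  apply twoArcDisjointDipaths_of_netIn (D := univ.filter fun e =>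
    reverseArcs (reverseArcs o P) M e ≠ o e)
  ext v
  have hP' := congrFun hdegP v
  have hM' := congrFun hdegM v
  simp only [Pi.add_apply, Pi.single_apply] at hP' hM'
  simp only [netIn_filter_ne, Pi.sub_apply, Pi.single_apply]
  split_ifs at * <;> omega

end Menger

theorem exists_sum_nonneg_of_union_closed {V : Type*} [Fintype V] [DecidableEq V]
    {p : Finset V → Prop} (hp : ∀ Z₁ Z₂, p Z₁ → p Z₂ → (Z₁ ∩ Z₂).Nonempty → p (Z₁ ∪ Z₂))
    {f : V → ℤ} (hf : ∀ Z, p Z → 0 ≤ ∑ v ∈ Z, f v) :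
    ∃ U : Finset V, (∀ Z, p Z → Z ⊆ U) ∧ (∀ v ∈ U, ∃ Z, p Z ∧ v ∈ Z) ∧ 0 ≤ ∑ v ∈ U, f v := by
  classical
  set M := univ.filter (Maximal p)
  have hdisj : (M : Set (Finset V)).PairwiseDisjoint id := by
    intro Z₁ h₁ Z₂ h₂ hne
    simp only [M, coe_filter, mem_univ, true_and] at h₁ h₂
    by_contra hcap
    have hu := hp _ _ h₁.prop h₂.prop (not_disjoint_iff_nonempty_inter.1 hcap)
    exact hne ((h₁.eq_of_le hu subset_union_left).trans (h₂.eq_of_le hu subset_union_right).symm)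
  refine ⟨M.biUnion id, fun Z hZ => ?_, fun v hv => ?_, ?_⟩
  · obtain ⟨Z', hle, hmax⟩ := Finite.exists_le_maximal hZ
    exact hle.trans (subset_biUnion_of_mem id (by simpa [M] using hmax))
  · obtain ⟨Z, hZ, hvZ⟩ := mem_biUnion.1 hv
    exact ⟨Z, (mem_filter.1 hZ).2.prop, hvZ⟩
  · rw [sum_biUnion hdisj]
    exact sum_nonneg fun Z hZ => hf Z (mem_filter.1 hZ).2.prop

theorem exists_neg_of_sum_nonpos {V : Type*} [DecidableEq V] {f : V → ℤ} {A U : Finset V}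
    {t : V} (hA : ∑ v ∈ A, f v ≤ 0) (hU : 0 ≤ ∑ v ∈ U, f v) (hUA : U ⊆ A.erase t)
    (ht : 0 < f t) (htA : t ∈ A) : ∃ s ∈ A, s ≠ t ∧ s ∉ U ∧ f s < 0 := by
  by_contra! hnn
  have h₁ : 0 ≤ ∑ v ∈ (A \ U).erase t, f v := sum_nonneg fun v hv => by
    obtain ⟨hvt, hvA, hvU⟩ : v ≠ t ∧ v ∈ A ∧ v ∉ U := by simpa [and_assoc] using hv
    exact hnn v hvA hvt hvU
  have h₂ := sum_erase_add _ f (mem_sdiff.2 ⟨htA, fun h => by simpa using hUA h⟩)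
  have h₃ := sum_sdiff (f := f) (hUA.trans (erase_subset t A))
  linarith

section Exchange

variable {V E : Type*} [Fintype V] [Fintype E] [DecidableEq V] {ends : E → V × V}
  {o o₁ o₂ : E → Bool}

/-- Take `A` of minimum size; otherwise uncrossing `A` with `Y` gives the smaller set `A ∩ Y`. -/
theorem StronglyConnected.exists_minimal_inCut_le_one (ho : StronglyConnected ends o) (t : V) :
    ∃ A : Finset V, t ∈ A ∧ inCut ends o A ≤ 1 ∧
      ∀ Y, t ∈ Y → inCut ends o Y ≤ 1 → A ⊆ Y ∨ A ∪ Y = univ := by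
  obtain ⟨A, hA, hmin⟩ := exists_min_image
    (univ.filter fun A : Finset V => t ∈ A ∧ inCut ends o A ≤ 1) card ⟨univ, by simp [inCut_univ]⟩
  simp only [mem_filter, mem_univ, true_and] at hA hmin
  refine ⟨A, hA.1, hA.2, fun Y htY hY => ?_⟩
  by_contra! hAY
  have hsub := inCut_union_add_inCut_inter_le (ends := ends) o A Y
  have hunion := ho.inCut_pos ⟨t, mem_union_left _ hA.1⟩ hAY.2
  have hle := hmin (A ∩ Y) ⟨mem_inter.2 ⟨hA.1, htY⟩, by omega⟩
  exact (card_lt_card ⟨inter_subset_left, fun h => hAY.1 (h.trans inter_subset_right)⟩).not_ge hle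

theorem StronglyConnected.inCut_compl_union_le_one (ho : StronglyConnected ends o)
    {Z₁ Z₂ : Finset V} (h₁ : inCut ends o Z₁ᶜ ≤ 1) (h₂ : inCut ends o Z₂ᶜ ≤ 1)
    (hinter : (Z₁ ∩ Z₂).Nonempty) (hunion : Z₁ ∪ Z₂ ≠ univ) : inCut ends o (Z₁ ∪ Z₂)ᶜ ≤ 1 := by
  have hsub := inCut_union_add_inCut_inter_le (ends := ends) o Z₁ᶜ Z₂ᶜ
  rw [← compl_inter, ← compl_union] at hsub
  obtain ⟨v, hv⟩ : ∃ v, v ∉ Z₁ ∪ Z₂ := by simpa [eq_univ_iff_forall] using hunion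
  have := ho.inCut_pos (X := (Z₁ ∩ Z₂)ᶜ) ⟨v, by simp_all⟩ ((compl_ne_univ_iff_nonempty _).2 hinter)
  omega

theorem sum_indeg_sub_indeg_nonpos (ho₂ : StronglyConnected ends o₂) {A : Finset V}
    (hA : A.Nonempty) (h : inCut ends o₁ A ≤ 1) :
    ∑ v ∈ A, ((indeg ends o₁ v : ℤ) - indeg ends o₂ v) ≤ 0 := by
  rw [sum_indeg_sub_indeg]
  by_cases hAu : A = univ
  · simp [hAu, inCut_univ]
  · have := ho₂.inCut_pos hA hAu
    omega

theorem sum_indeg_sub_indeg_nonneg (ho₂ : StronglyConnected ends o₂) {Z : Finset V}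
    (hZc : Zᶜ.Nonempty) (h : inCut ends o₁ Zᶜ ≤ 1) :
    0 ≤ ∑ v ∈ Z, ((indeg ends o₁ v : ℤ) - indeg ends o₂ v) := by
  have htot := sum_add_sum_compl Z fun v => (indeg ends o₁ v : ℤ) - indeg ends o₂ v
  rw [sum_indeg_sub_indeg o₁ o₂ univ, inCut_univ, inCut_univ] at htot
  have := sum_indeg_sub_indeg_nonpos ho₂ hZc h
  omega

/-- Exchange lemma. The sets `Z ⊆ A \ {t}` whose complement is entered by one arc of `o₁` carry
a nonnegative `indeg o₁ - indeg o₂` sum, while `A` carries a nonpositive one; so some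
`s ∈ A` outside all of them loses in-degree, and no set entered by one arc separates it from `t`. -/
theorem exists_twoArcDisjointDipaths_of_indeg_lt [DecidableEq E] (ho₁ : StronglyConnected ends o₁)
    (ho₂ : StronglyConnected ends o₂) {t : V} (ht : indeg ends o₂ t < indeg ends o₁ t) :
    ∃ s, indeg ends o₁ s < indeg ends o₂ s ∧ TwoArcDisjointDipaths ends o₁ s t := by
  set δ : V → ℤ := fun v => indeg ends o₁ v - indeg ends o₂ v with hδ
  obtain ⟨A, htA, hA, hAmin⟩ := ho₁.exists_minimal_inCut_le_one t
  obtain ⟨U, hUsup, hUsub, hU⟩ := exists_sum_nonneg_of_union_closed (f := δ)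
    (p := fun Z => Z ⊆ A.erase t ∧ inCut ends o₁ Zᶜ ≤ 1)
    (fun Z₁ Z₂ h₁ h₂ hinter => ⟨union_subset h₁.1 h₂.1,
      ho₁.inCut_compl_union_le_one h₁.2 h₂.2 hinter
        (ne_of_mem_of_not_mem' (mem_univ t) fun h => by simpa using union_subset h₁.1 h₂.1 h).symm⟩)
    (fun Z hZ => sum_indeg_sub_indeg_nonneg ho₂ ⟨t, mem_compl.2 fun h => by simpa using hZ.1 h⟩
      hZ.2)
  have hUA : U ⊆ A.erase t := fun v hv => by
    obtain ⟨Z, hZ, hvZ⟩ := hUsub v hv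
    exact hZ.1 hvZ
  obtain ⟨s, hsA, hst, hsU, hδs⟩ := exists_neg_of_sum_nonpos (f := δ)
    (sum_indeg_sub_indeg_nonpos ho₂ ⟨t, htA⟩ hA) hU hUA (by simp only [hδ]; omega) htA
  refine ⟨s, by simp only [hδ] at hδs; omega,
    twoArcDisjointDipaths_of_two_le_inCut fun X htX hsX => ?_⟩
  by_contra! hX
  have hXc : Xᶜ ⊆ A.erase t := by
    rcases hAmin X htX (by omega) with hAX | hAX
    · exact absurd (hAX hsA) hsX
    · intro v hv
      rw [mem_compl] at hv
      exact mem_erase.2 ⟨fun h => hv (h ▸ htX), (mem_union.1 (hAX ▸ mem_univ v)).resolve_right hv⟩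
  exact hsU (hUsup Xᶜ ⟨hXc, by rw [compl_compl]; omega⟩ (by simpa))

end Exchange

theorem List.lt_of_countP_lt (c : ℕ) {L L' : List ℕ} (hL : L.Pairwise (· ≥ ·))
    (hL' : L'.Pairwise (· ≥ ·)) (hc : L'.countP (c ≤ ·) < L.countP (c ≤ ·))
    (habove : ∀ k, c < k → L'.countP (k ≤ ·) = L.countP (k ≤ ·)) : L' < L := by
  induction L generalizing L' with
  | nil => simp at hc
  | cons x L ih =>
    cases L' with
    | nil => exact List.nil_lt_cons x L
    | cons y L' =>
      have hzero : ∀ k, x < k → (x :: L).countP (k ≤ ·) = 0 := fun k hk =>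
        List.countP_eq_zero.2 fun a ha => by
          rcases List.mem_cons.1 ha with rfl | ha
          · simpa using hk
          · simpa using (List.rel_of_pairwise_cons hL ha).trans_lt hk
      rcases lt_trichotomy y x with hyx | rfl | hxy
      · exact List.Lex.rel hyx
      · refine List.Lex.cons (ih hL.of_cons hL'.of_cons ?_ fun k hk => ?_)
        · simp only [List.countP_cons] at hc
          omega
        · have := habove k hk
          simp only [List.countP_cons] at this
          omega
      · by_cases hcy : c < y
        · have := habove y hcy
          rw [hzero y hxy, List.countP_cons] at this
          simp at this
        · rw [hzero c (by omega)] at hc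
          omega

theorem apply_of_add_single_eq {V : Type*} [DecidableEq V] {m m' : V → ℕ} {s t : V}
    (h : m' + Pi.single t 1 = m + Pi.single s 1) (hst : s ≠ t) :
    m' s = m s + 1 ∧ m' t + 1 = m t ∧ ∀ v, v ≠ s → v ≠ t → m' v = m v := by
  have hv : ∀ v, m' v + (if v = t then 1 else 0) = m v + if v = s then 1 else 0 := fun v => by
    simpa [Pi.single_apply] using congrFun h v
  refine ⟨by simpa [hst] using hv s, by simpa [hst.symm] using hv t, fun v hvs hvt => ?_⟩
  simpa [hvs, hvt] using hv v

section DecSeq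

variable {V : Type*} [Fintype V]

theorem pairwise_decSeq (m : V → ℕ) : (decSeq m).Pairwise (· ≥ ·) := by
  rw [decSeq, List.pairwise_reverse]
  exact Multiset.pairwise_sort _ _

theorem countP_decSeq (m : V → ℕ) (k : ℕ) :
    (decSeq m).countP (k ≤ ·) = #{v | k ≤ m v} := by
  rw [decSeq, (List.reverse_perm _).countP_eq, ← Multiset.coe_countP, Multiset.sort_eq,
    Multiset.countP_map, card_def, filter_val]

theorem decSeq_comp_equiv (m : V → ℕ) (σ : V ≃ V) : decSeq (m ∘ σ) = decSeq m := by
  rw [decSeq, decSeq, ← Multiset.map_map, Multiset.map_univ_val_equiv]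

variable [DecidableEq V] {m m' : V → ℕ} {s t : V}

/-- Moving a unit from `t` to `s` with `m s + 2 ≤ m t` lowers the number of entries `≥ m t`
and keeps the number of entries `≥ k` for every larger `k`. -/
theorem decSeq_lt_of_add_single (h : m' + Pi.single t 1 = m + Pi.single s 1)
    (hst : m s + 2 ≤ m t) : decSeq m' < decSeq m := by
  obtain ⟨hs, ht, hv⟩ := apply_of_add_single_eq h (by rintro rfl; omega)
  have hge : ∀ k, m t ≤ k → ∀ v, k ≤ m' v → k ≤ m v := fun k hk v hkv => by
    by_cases hvs : v = s
    · subst hvs; omega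
    by_cases hvt : v = t
    · subst hvt; omega
    rwa [← hv v hvs hvt]
  refine List.lt_of_countP_lt (m t) (pairwise_decSeq m) (pairwise_decSeq m') ?_ fun k hk => ?_
  · rw [countP_decSeq, countP_decSeq]
    refine card_lt_card ⟨monotone_filter_right _ fun v _ => hge _ le_rfl v, fun hsub => ?_⟩
    have := hsub (mem_filter.2 ⟨mem_univ t, le_rfl⟩)
    simp only [mem_filter, mem_univ, true_and] at this
    omega
  · rw [countP_decSeq, countP_decSeq]
    congr 1
    refine filter_congr fun v _ => ⟨hge k hk.le v, fun hkv => ?_⟩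
    by_cases hvs : v = s
    · subst hvs; omega
    by_cases hvt : v = t
    · subst hvt; omega
    rwa [hv v hvs hvt]

theorem decSeq_le_of_add_single (h : m' + Pi.single t 1 = m + Pi.single s 1)
    (hst : m s + 1 ≤ m t) : decSeq m' ≤ decSeq m := by
  rcases hst.lt_or_eq with hlt | heq
  · exact (decSeq_lt_of_add_single h hlt).le
  obtain ⟨hs, ht, hv⟩ := apply_of_add_single_eq h (by rintro rfl; omega)
  have hswap : m' = m ∘ Equiv.swap s t := by
    ext v
    by_cases hvs : v = s
    · subst hvs
      simp only [Function.comp_apply, Equiv.swap_apply_left]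
      omega
    by_cases hvt : v = t
    · subst hvt
      simp only [Function.comp_apply, Equiv.swap_apply_right]
      omega
    simp [Equiv.swap_apply_of_ne_of_ne hvs hvt, hv v hvs hvt]
  rw [hswap, decSeq_comp_equiv]

end DecSeq

theorem sum_natAbs_sub_lt_of_add_single {V : Type*} [Fintype V] [DecidableEq V]
    {m m₂ m₃ : V → ℕ} {s t : V} (h : m₃ + Pi.single s 1 = m₂ + Pi.single t 1)
    (ht : m₂ t < m t) (hs : m s < m₂ s) :
    ∑ v, ((m v : ℤ) - m₃ v).natAbs < ∑ v, ((m v : ℤ) - m₂ v).natAbs := by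
  obtain ⟨ht₃, hs₃, hv⟩ := apply_of_add_single_eq h (by rintro rfl; omega)
  refine sum_lt_sum (fun v _ => ?_) ⟨t, mem_univ t, by omega⟩
  by_cases hvs : v = s
  · subst hvs; omega
  by_cases hvt : v = t
  · subst hvt; omega
  rw [hv v hvt hvs]

section DecMin

variable {V E : Type*} [Fintype V] [Fintype E] [DecidableEq V] [DecidableEq E]
  {ends : E → V × V} {o o₂ : E → Bool}

/-- Take `t` with `indeg o₂ t < indeg o t` and `indeg o₂ t` maximal. The exchange lemma in `o`
and `hno` give `s` with `indeg o t ≤ indeg o s + 1 ≤ indeg o₂ s`; the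
exchange lemma in `o₂` at `s` then yields a transfer in `o₂` from `s` to some `t₂` with
`indeg o₂ t₂ ≤ indeg o₂ t`, which does not increase `o₂` and moves it towards `o`. -/
theorem exists_closer_of_indeg_ne (ho : StronglyConnected ends o)
    (hno : ¬∃ s t, indeg ends o s + 2 ≤ indeg ends o t ∧ TwoArcDisjointDipaths ends o s t)
    (ho₂ : StronglyConnected ends o₂) (hne : indeg ends o₂ ≠ indeg ends o) :
    ∃ o₃, StronglyConnected ends o₃ ∧ decSeq (indeg ends o₃) ≤ decSeq (indeg ends o₂) ∧
      ∑ v, ((indeg ends o v : ℤ) - indeg ends o₃ v).natAbs <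
        ∑ v, ((indeg ends o v : ℤ) - indeg ends o₂ v).natAbs := by
  obtain ⟨t₀, ht₀⟩ := exists_indeg_lt_of_ne hne
  obtain ⟨t, ht, hmax⟩ := (univ.filter fun t => indeg ends o₂ t < indeg ends o t).exists_max_image
    (indeg ends o₂) ⟨t₀, by simpa using ht₀⟩
  simp only [mem_filter, mem_univ, true_and] at ht hmax
  obtain ⟨s, hs, hst⟩ := exists_twoArcDisjointDipaths_of_indeg_lt ho ho₂ ht
  have hgap : indeg ends o t ≤ indeg ends o s + 1 := by
    by_contra! hgap
    exact hno ⟨s, t, by omega, hst⟩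
  obtain ⟨t₂, ht₂, hts⟩ := exists_twoArcDisjointDipaths_of_indeg_lt ho₂ ho hs
  have := hmax t₂ ht₂
  obtain ⟨o₃, ho₃, hdeg⟩ := hts.exists_stronglyConnected_add_single ho₂
  exact ⟨o₃, ho₃, decSeq_le_of_add_single hdeg (by omega),
    sum_natAbs_sub_lt_of_add_single hdeg ht₂ hs⟩

theorem decSeq_le_of_not_exists_twoArcDisjointDipaths (ho : StronglyConnected ends o)
    (hno : ¬∃ s t, indeg ends o s + 2 ≤ indeg ends o t ∧ TwoArcDisjointDipaths ends o s t)
    (ho₂ : StronglyConnected ends o₂) : decSeq (indeg ends o) ≤ decSeq (indeg ends o₂) := by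
  induction hd : ∑ v, ((indeg ends o v : ℤ) - indeg ends o₂ v).natAbs using Nat.strong_induction_on
    generalizing o₂ with
  | _ n ih =>
  by_cases heq : indeg ends o₂ = indeg ends o
  · rw [heq]
  obtain ⟨o₃, ho₃, hle, hlt⟩ := exists_closer_of_indeg_ne ho hno ho₂ heq
  exact (ih _ (hd ▸ hlt) ho₃ rfl).trans hle

end DecMin

theorem decmin_strong_orientation_iff_general {V E : Type*} [Fintype V] [Fintype E] [DecidableEq V]
    (ends : E → V × V)
    (o : E → Bool) (ho : ∀ u v : V, Reach ends o u v) :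
    (∀ o' : E → Bool, (∀ u v : V, Reach ends o' u v) →
        decSeq (indeg ends o) ≤ decSeq (indeg ends o')) ↔
      ¬ ∃ s t : V, indeg ends o s + 2 ≤ indeg ends o t ∧
        ∃ P Q : List E, IsDipath ends o s t P ∧ IsDipath ends o s t Q ∧ P.Disjoint Q := by
  classical
  refine ⟨fun hmin ⟨s, t, hgap, hpaths⟩ => ?_, fun hno o' ho' =>
    decSeq_le_of_not_exists_twoArcDisjointDipaths ho hno ho'⟩
  obtain ⟨o', ho', hdeg⟩ := TwoArcDisjointDipaths.exists_stronglyConnected_add_single ho hpaths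
  exact (decSeq_lt_of_add_single hdeg hgap).not_ge (hmin o' ho')

/-- A strongly connected orientation `D` of a 2-edge-connected graph `G`
is decreasingly minimal among all strongly connected orientations of `G` iff there are no
nodes `s, t` with `ρ_D(t) ≥ ρ_D(s) + 2` joined by two arc-disjoint `s→t` dipaths in `D`. -/
theorem decmin_strong_orientation_iff {V E : Type*} [Fintype V] [Fintype E] [DecidableEq V]
    (ends : E → V × V) (hloop : ∀ e, (ends e).1 ≠ (ends e).2)
    (h2ec : ∀ X : Finset V, X.Nonempty → X ≠ Finset.univ → 2 ≤ dG ends X)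
    (o : E → Bool) (ho : ∀ u v : V, Reach ends o u v) :
    (∀ o' : E → Bool, (∀ u v : V, Reach ends o' u v) →
        decSeq (indeg ends o) ≤ decSeq (indeg ends o')) ↔
      ¬ ∃ s t : V, indeg ends o s + 2 ≤ indeg ends o t ∧
        ∃ P Q : List E, IsDipath ends o s t P ∧ IsDipath ends o s t Q ∧ P.Disjoint Q :=
  decmin_strong_orientation_iff_general ends o ho
end

section
/- Let G=(V,E) be a graph, D a strongly connected orientation, s, t nodes such that D contains two arc-disjoint s→t directed paths, and P any s→t directed path in D. Then the digraph D' obtained from D by reversing the arcs of P is also strongly connected. -/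
/-!
Let `Z` be the set of nodes from which `v` is reachable after reversing `P`, and suppose `u ∉ Z`.
No arc of the new digraph enters `Z`; hence in `D` no arc outside `P` enters `Z`, and `P` never
leaves `Z`. Strong connectivity of `D` gives an arc entering `Z`, so it lies on `P`. A walk that
never leaves `Z` enters it at most once, so `s ∉ Z`, `t ∈ Z`, and `P` has a single arc entering
`Z`. Each of the two arc-disjoint `s → t` dipaths enters `Z`, necessarily through that arc.
-/

open Finset

/-- Reversing the arcs in the list `P`. -/
def revOrient {E : Type*} [DecidableEq E] (o : E → Bool) (P : List E) : E → Bool :=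
  fun e => if e ∈ P then ! o e else o e

def Enters {V E : Type*} (ends : E → V × V) (o : E → Bool) (Z : Set V) (e : E) : Prop :=
  ohead ends o e ∈ Z ∧ otail ends o e ∉ Z

section Enters

variable {V E : Type*} {ends : E → V × V} {o : E → Bool} {Z : Set V}

lemma enters_compl_iff {e : E} :
    Enters ends o Zᶜ e ↔ otail ends o e ∈ Z ∧ ohead ends o e ∉ Z := by
  simp only [Enters, Set.mem_compl_iff, not_not, and_comm]

lemma enters_revOrient_of_mem [DecidableEq E] {P : List E} {e : E} (h : e ∈ P) :
    Enters ends (revOrient o P) Z e ↔ Enters ends o Zᶜ e := by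
  rw [enters_compl_iff]
  cases hoe : o e <;> simp [Enters, ohead, otail, revOrient, h, hoe]

lemma enters_revOrient_of_notMem [DecidableEq E] {P : List E} {e : E} (h : e ∉ P) :
    Enters ends (revOrient o P) Z e ↔ Enters ends o Z e := by
  simp [Enters, ohead, otail, revOrient, h]

lemma not_enters_setOf_reach (v : V) (e : E) : ¬Enters ends o {x | Reach ends o x v} e :=
  fun ⟨hhead, htail⟩ => htail (Relation.ReflTransGen.head ⟨e, rfl, rfl⟩ hhead)

lemma Reach.exists_enters {a b : V} (h : Reach ends o a b) (ha : a ∉ Z) (hb : b ∈ Z) :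
    ∃ e, Enters ends o Z e := by
  induction h with
  | refl => exact absurd hb ha
  | tail _ step ih =>
    obtain ⟨e, htail, hhead⟩ := step
    by_cases hc : otail ends o e ∈ Z
    · exact ih (htail ▸ hc)
    · exact ⟨e, hhead ▸ hb, hc⟩

namespace IsDipath

lemma exists_enters {a b : V} {L : List E} (h : IsDipath ends o a b L) (ha : a ∉ Z)
    (hb : b ∈ Z) : ∃ e ∈ L, Enters ends o Z e := by
  induction L generalizing a with
  | nil => exact absurd ((h : a = b) ▸ hb) ha
  | cons e L ih =>
    by_cases hc : ohead ends o e ∈ Z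
    · exact ⟨e, List.mem_cons_self .., hc, h.1 ▸ ha⟩
    · obtain ⟨f, hf, hfZ⟩ := ih h.2 hc
      exact ⟨f, List.mem_cons_of_mem _ hf, hfZ⟩

variable {a b : V} {L : List E} (hL : IsDipath ends o a b L)
  (hstay : ∀ e ∈ L, ¬Enters ends o Zᶜ e)
include hL hstay

lemma mem_of_mem (ha : a ∈ Z) : b ∈ Z := by
  by_contra hb
  obtain ⟨e, he, hleave⟩ := hL.exists_enters (Z := Zᶜ) (not_not.2 ha) hb
  exact hstay e he hleave

lemma not_enters_of_mem (ha : a ∈ Z) : ∀ e ∈ L, ¬Enters ends o Z e := by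
  induction L generalizing a with
  | nil => simp
  | cons e L ih =>
    have hhead : ohead ends o e ∈ Z := by
      by_contra hc
      exact hstay e (List.mem_cons_self ..) (enters_compl_iff.2 ⟨hL.1 ▸ ha, hc⟩)
    rintro f (_ | ⟨_, hf⟩)
    · exact fun hfZ => hfZ.2 (hL.1 ▸ ha)
    · exact ih hL.2 (fun g hg => hstay g (List.mem_cons_of_mem _ hg)) hhead f hf

lemma mem_of_enters {e : E} (he : e ∈ L) (henters : Enters ends o Z e) : b ∈ Z := by
  induction L generalizing a with
  | nil => simp at he
  | cons f L ih =>
    have hstay' : ∀ g ∈ L, ¬Enters ends o Zᶜ g := fun g hg => hstay g (List.mem_cons_of_mem _ hg)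
    rcases List.mem_cons.1 he with rfl | he
    · exact hL.2.mem_of_mem hstay' henters.1
    · exact ih hL.2 hstay' he

lemma eq_of_enters {e₁ e₂ : E} (he₁ : e₁ ∈ L) (he₂ : e₂ ∈ L) (h₁ : Enters ends o Z e₁)
    (h₂ : Enters ends o Z e₂) : e₁ = e₂ := by
  induction L generalizing a with
  | nil => simp at he₁
  | cons f L ih =>
    have hstay' : ∀ g ∈ L, ¬Enters ends o Zᶜ g := fun g hg => hstay g (List.mem_cons_of_mem _ hg)
    rcases List.mem_cons.1 he₁ with rfl | hmem₁ <;> rcases List.mem_cons.1 he₂ with rfl | hmem₂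
    · rfl
    · exact absurd h₂ (hL.2.not_enters_of_mem hstay' h₁.1 e₂ hmem₂)
    · exact absurd h₁ (hL.2.not_enters_of_mem hstay' h₂.1 e₁ hmem₁)
    · exact ih hL.2 hstay' hmem₁ hmem₂

end IsDipath

end Enters

theorem reverse_dipath_strongly_connected_general {V E : Type*}
    [DecidableEq E]
    (ends : E → V × V)
    (o : E → Bool) (ho : ∀ u v : V, Reach ends o u v) (s t : V)
    (htwo : ∃ P Q : List E, IsDipath ends o s t P ∧ IsDipath ends o s t Q ∧ P.Disjoint Q)
    (P : List E) (hP : IsDipath ends o s t P) :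
    ∀ u v : V, Reach ends (revOrient o P) u v := by
  intro u v
  by_contra huv
  set Z : Set V := {x | Reach ends (revOrient o P) x v}
  have hclosed := not_enters_setOf_reach (ends := ends) (o := revOrient o P) v
  have hstay : ∀ e ∈ P, ¬Enters ends o Zᶜ e :=
    fun e he => (enters_revOrient_of_mem he).not.1 (hclosed e)
  have hinP : ∀ e, Enters ends o Z e → e ∈ P :=
    fun e he => by_contra fun hnot => hclosed e ((enters_revOrient_of_notMem hnot).2 he)
  obtain ⟨e, he⟩ := (ho u v).exists_enters (Z := Z) huv .refl
  have hs : s ∉ Z := fun hs => hP.not_enters_of_mem hstay hs e (hinP e he) he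
  have ht : t ∈ Z := hP.mem_of_enters hstay (hinP e he) he
  obtain ⟨Q₁, Q₂, hQ₁, hQ₂, hdisj⟩ := htwo
  obtain ⟨e₁, he₁, h₁⟩ := hQ₁.exists_enters hs ht
  obtain ⟨e₂, he₂, h₂⟩ := hQ₂.exists_enters hs ht
  have : e₁ = e₂ := hP.eq_of_enters hstay (hinP e₁ h₁) (hinP e₂ h₂) h₁ h₂
  exact hdisj he₁ (this ▸ he₂)

/-- If `D` is strongly connected, contains two arc-disjoint `s→t`
dipaths, and `P` is any `s→t` dipath in `D`, then reversing `P` yields a strongly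
connected digraph. -/
theorem reverse_dipath_strongly_connected {V E : Type*}
    [Fintype V] [Fintype E] [DecidableEq V] [DecidableEq E]
    (ends : E → V × V) (hloop : ∀ e, (ends e).1 ≠ (ends e).2)
    (o : E → Bool) (ho : ∀ u v : V, Reach ends o u v) (s t : V)
    (htwo : ∃ P Q : List E, IsDipath ends o s t P ∧ IsDipath ends o s t Q ∧ P.Disjoint Q)
    (P : List E) (hP : IsDipath ends o s t P) (hPnd : P.Nodup) :
    ∀ u v : V, Reach ends (revOrient o P) u v :=
  reverse_dipath_strongly_connected_general ends o ho s t htwo P hP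
end

section
/- In the Newton–Dinkelbach iteration for maximizing ⌈p(X)/|X|⌉: if both μ_{j−1} and μ_j are bad, where μ_j = ⌈p(X_{j−1})/|X_{j−1}|⌉ and X_k ∈ argmax{ p(X) − μ_k |X| } for k = j−1, j, then |X_{j−1}| > |X_j|. Consequently the iteration reaches a good value in at most |S| steps. -/
open Finset

/-- `ceilDiv a b = ⌈a / b⌉` for an integer `a` and positive natural `b`. -/
def ceilDiv (a : ℤ) (b : ℕ) : ℤ := -(Int.ediv (-a) (b : ℤ))

/-- An integer `μ` is *good* for the set-function `p` (values `−∞` allowed) if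
`μ·|X| ≥ p(X)` for every `X ⊆ S`. -/
def Good {S : Type*} [Fintype S] [DecidableEq S] (p : Finset S → WithBot ℤ) (μ : ℤ) : Prop :=
  ∀ X : Finset S, p X ≤ ((μ * (X.card : ℤ) : ℤ) : WithBot ℤ)

/-- The Newton–Dinkelbach objective `p(X) − μ·|X|` (computed in `ℤ ∪ {−∞}`). -/
def score {S : Type*} [Fintype S] [DecidableEq S] (p : Finset S → WithBot ℤ) (μ : ℤ)
    (X : Finset S) : WithBot ℤ :=
  p X + ((-(μ * (X.card : ℤ)) : ℤ) : WithBot ℤ)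

lemma ceilDiv_le (a : ℤ) (b : ℕ) (hb : 0 < b) : a ≤ ceilDiv a b * b := by
  have h := Int.ediv_mul_le (-a) (b := (b : ℤ)) (by exact_mod_cast hb.ne')
  unfold ceilDiv
  have : Int.ediv (-a) b * b ≤ -a := h
  nlinarith [this]

lemma lt_ceilDiv (a μ : ℤ) (b : ℕ) (hb : 0 < b) (h : μ * b < a) : μ < ceilDiv a b := by
  have hb' : (0 : ℤ) < (b : ℤ) := by exact_mod_cast hb
  have : (-a) / (b : ℤ) < -μ := (Int.ediv_lt_iff_lt_mul hb').2 (by nlinarith)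
  unfold ceilDiv
  have he : Int.ediv (-a) (b : ℤ) = (-a) / (b : ℤ) := rfl
  rw [he]
  omega

/-- Key facts at one bad step: the maximizer is nonempty and its value beats `μ·|X|`. -/
lemma key_step {S : Type*} [Fintype S] [DecidableEq S] (p : Finset S → WithBot ℤ)
    (hp0 : p ∅ = 0) (μ : ℤ) (X : Finset S) (a : ℤ)
    (hbad : ¬ Good p μ) (hmax : ∀ Y, score p μ Y ≤ score p μ X)
    (ha : p X = ((a : ℤ) : WithBot ℤ)) :
    0 < X.card ∧ μ * X.card < a := by
  rw [Good] at hbad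
  push_neg at hbad
  obtain ⟨Y, hY⟩ := hbad
  -- p Y is a coe
  obtain ⟨b, hb⟩ : ∃ b : ℤ, p Y = (b : WithBot ℤ) := by
    cases hpY : p Y with
    | bot => rw [hpY] at hY; exact absurd hY (by simp)
    | coe b => exact ⟨b, rfl⟩
  rw [hb, WithBot.coe_lt_coe] at hY
  have hmaxY := hmax Y
  rw [score, score, hb, ha, ← WithBot.coe_add, ← WithBot.coe_add, WithBot.coe_le_coe] at hmaxY
  have hkey : μ * X.card < a := by linarith
  refine ⟨?_, hkey⟩
  by_contra hc
  have hX : X = ∅ := Finset.card_eq_zero.1 (by omega)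
  rw [hX, hp0] at ha
  have : (0 : ℤ) = a := by exact_mod_cast ha
  rw [hX] at hkey
  simp at hkey
  omega

/-- In the Newton–Dinkelbach iteration, if `μ_j` and `μ_{j+1}` are both
bad then `|X_j| > |X_{j+1}|`; consequently the iteration reaches a good value within
`|S|` steps. -/
theorem newton_dinkelbach_card_decrease_and_termination {S : Type*} [Fintype S] [DecidableEq S]
    (p : Finset S → WithBot ℤ) (hp0 : p ∅ = 0)
    (hn : 0 < Fintype.card S)
    (aS : ℤ) (hpS : p Finset.univ = (aS : WithBot ℤ))
    (μ : ℕ → ℤ) (X : ℕ → Finset S) (a : ℕ → ℤ)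
    (hμ0 : μ 0 = ceilDiv aS (Fintype.card S) - 1)
    (hstep : ∀ j, ¬ Good p (μ j) →
      (∀ Y : Finset S, score p (μ j) Y ≤ score p (μ j) (X j)) ∧
      p (X j) = ((a j : ℤ) : WithBot ℤ) ∧
      μ (j + 1) = ceilDiv (a j) (X j).card) :
    (∀ j, ¬ Good p (μ j) → ¬ Good p (μ (j + 1)) → (X (j + 1)).card < (X j).card) ∧
    (∃ h ≤ Fintype.card S, Good p (μ h)) := by
  have decrease : ∀ j, ¬ Good p (μ j) → ¬ Good p (μ (j + 1)) → (X (j + 1)).card < (X j).card := by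
    intro j h1 h2
    obtain ⟨hmax1, ha1, hrec1⟩ := hstep j h1
    obtain ⟨hmax2, ha2, _⟩ := hstep (j + 1) h2
    obtain ⟨hc1, hA1⟩ := key_step p hp0 (μ j) (X j) (a j) h1 hmax1 ha1
    obtain ⟨hc2, hA2⟩ := key_step p hp0 (μ (j + 1)) (X (j + 1)) (a (j + 1)) h2 hmax2 ha2
    have hB : μ j < μ (j + 1) := by
      rw [hrec1]; exact lt_ceilDiv _ _ _ hc1 hA1
    have hC : a j ≤ μ (j + 1) * (X j).card := by
      rw [hrec1]; exact ceilDiv_le _ _ hc1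
    have hD := hmax1 (X (j + 1))
    rw [score, score, ha1, ha2, ← WithBot.coe_add, ← WithBot.coe_add, WithBot.coe_le_coe] at hD
    by_contra hcon
    push_neg at hcon
    have hcast : ((X j).card : ℤ) ≤ ((X (j + 1)).card : ℤ) := by exact_mod_cast hcon
    nlinarith [mul_nonneg (sub_nonneg.2 hB.le) (sub_nonneg.2 hcast)]
  refine ⟨decrease, ?_⟩
  by_contra hno
  push_neg at hno
  have mono : ∀ j, j ≤ Fintype.card S → (X j).card + j ≤ (X 0).card := by
    intro j
    induction j with
    | zero => omega
    | succ k ih =>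
      intro hk
      have h1 : ¬ Good p (μ k) := hno k (by omega)
      have h2 : ¬ Good p (μ (k + 1)) := hno (k + 1) hk
      have := decrease k h1 h2
      have := ih (by omega)
      omega
  have hlast := mono (Fintype.card S) le_rfl
  have hX0 : (X 0).card ≤ Fintype.card S := by
    simpa using Finset.card_le_univ (X 0)
  have hbadn : ¬ Good p (μ (Fintype.card S)) := hno _ le_rfl
  obtain ⟨hmaxn, han, _⟩ := hstep _ hbadn
  obtain ⟨hcn, _⟩ := key_step p hp0 _ _ _ hbadn hmaxn han
  omega
end

section
/- Let the Newton–Dinkelbach iteration (as above) terminate at the first index h for which μ_h is good. Then μ_h equals the minimum good integer, which in turn equals max{ ⌈p(X)/|X|⌉ : ∅ ≠ X ⊆ S }. -/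
open Finset

/-- If the Newton–Dinkelbach iteration terminates at the first good
value `μ_h = ⌈p(X_{h−1})/|X_{h−1}|⌉` (with `μ_{h−1}` bad and `X_{h−1}` a maximizer of
`p(X) − μ_{h−1}|X|`), then `μ_h` is the minimum good integer, and it equals
`max{ ⌈p(X)/|X|⌉ : ∅ ≠ X ⊆ S }`. -/
theorem newton_dinkelbach_termination_value {S : Type*} [Fintype S] [DecidableEq S]
    (p : Finset S → WithBot ℤ) (hp0 : p ∅ = 0)
    (aS : ℤ) (hpS : p Finset.univ = (aS : WithBot ℤ))
    (μprev μh : ℤ) (hbad : ¬ Good p μprev)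
    (Xprev : Finset S) (hmax : ∀ X : Finset S, score p μprev X ≤ score p μprev Xprev)
    (aprev : ℤ) (haprev : p Xprev = (aprev : WithBot ℤ))
    (hμh : μh = ceilDiv aprev Xprev.card)
    (hgood : Good p μh) :
    IsLeast {ν : ℤ | Good p ν} μh ∧
    IsGreatest {z : ℤ | ∃ X : Finset S, X.Nonempty ∧
      ∃ aX : ℤ, p X = (aX : WithBot ℤ) ∧ z = ceilDiv aX X.card} μh := by
  have hceil : ∀ (a μ : ℤ) (b : ℕ), 0 < b → (ceilDiv a b ≤ μ ↔ a ≤ μ * b) := by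
    intro a μ b hb
    unfold ceilDiv
    rw [neg_le]
    have he : (-a).ediv (b:ℤ) = -a / (b:ℤ) := rfl
    rw [he, Int.le_ediv_iff_mul_le (by exact_mod_cast hb : (0:ℤ) < (b:ℤ))]
    constructor <;> intro h <;> nlinarith
  -- a bad witness
  obtain ⟨X0, hX0⟩ := not_forall.mp hbad
  have hlt0 : ((μprev * (X0.card : ℤ) : ℤ) : WithBot ℤ) < p X0 := lt_of_not_ge hX0
  obtain ⟨a0, ha0, ha0lt⟩ := WithBot.lt_iff_exists_coe.mp hlt0
  have ha0lt' : μprev * (X0.card : ℤ) < a0 := by exact_mod_cast ha0lt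
  have hscore0 : (0 : WithBot ℤ) < score p μprev X0 := by
    rw [score, ha0, ← WithBot.coe_add]
    exact_mod_cast (by linarith : (0:ℤ) < a0 + -(μprev * (X0.card : ℤ)))
  have hscoreprev : (0 : WithBot ℤ) < score p μprev Xprev := lt_of_lt_of_le hscore0 (hmax X0)
  have hprevlt : μprev * (Xprev.card : ℤ) < aprev := by
    rw [score, haprev, ← WithBot.coe_add] at hscoreprev
    have := WithBot.coe_lt_coe.mp hscoreprev
    linarith
  have hcard : 0 < Xprev.card := by
    rcases Nat.eq_zero_or_pos Xprev.card with h | h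
    · exfalso
      have hXe : Xprev = ∅ := Finset.card_eq_zero.mp h
      rw [hXe, hp0] at haprev
      have : (0:ℤ) = aprev := by exact_mod_cast haprev
      rw [h] at hprevlt
      simp at hprevlt
      omega
    · exact h
  constructor
  · refine ⟨hgood, ?_⟩
    intro ν hν
    have := hν Xprev
    rw [haprev] at this
    have h' : aprev ≤ ν * (Xprev.card : ℤ) := by exact_mod_cast this
    rw [hμh]
    exact (hceil aprev ν Xprev.card hcard).mpr h'
  · constructor
    · exact ⟨Xprev, Finset.card_pos.mp hcard, aprev, haprev, hμh⟩
    · rintro z ⟨X, hXne, aX, hpX, rfl⟩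
      have := hgood X
      rw [hpX] at this
      have h' : aX ≤ μh * (X.card : ℤ) := by exact_mod_cast this
      exact (hceil aX μh X.card (Finset.card_pos.mpr hXne)).mpr h'
end
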